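/- Let L be a positive linear operator with L(1) > 0 pointwise, acting on functions on X, and define P(f) := L(f)/L(1). Suppose ν_x := P*(δ_x) denotes the associated probability measure at x, i.e. ∫ f dν_x = P(f)(x). If Q is a subprobability measure on X × X whose first marginal is dominated by ν_x and whose second marginal is dominated by ν_y, then there exists a coupling π of ν_x and ν_y with π ≥ Q; consequently, for any metric d* ≤ 1 and any set E ⊆ X² with d*(z₁,z₂) ≤ c < 1 on E and Q supported on E, one has W̄(ν_x, ν_y) ≤ 1 − (1−c)·Q(X²). -/

import Mathlib

open MeasureTheory Set

/-- `π` is a coupling of `μ` and `ν`. -/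
def IsCoupling {X : Type*} [MeasurableSpace X]
    (π : Measure (X × X)) (μ ν : Measure X) : Prop :=
  π.map Prod.fst = μ ∧ π.map Prod.snd = ν

/-- Wasserstein-1 distance with respect to a cost function `dstar`. -/
noncomputable def wass {X : Type*} [MeasurableSpace X]
    (dstar : X → X → ℝ) (μ ν : Measure X) : ℝ :=
  sInf {r : ℝ | ∃ π : Measure (X × X), IsProbabilityMeasure π ∧ IsCoupling π μ ν ∧
    r = ∫ p, dstar p.1 p.2 ∂π}

/-! The missing mass `1 - Q(X²)` of the two marginals is the same on both sides, so the residuals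
`νx - Q₁` and `νy - Q₂` can be coupled independently (after normalising their product);
adding this to `Q` gives a coupling `π ≥ Q`. Under `π` the cost is at most `c` on `E`, which
carries at least the mass `Q(X²)`, and at most `1` elsewhere. -/

namespace MeasureTheory.Measure

variable {α β : Type*} [MeasurableSpace α] [MeasurableSpace β]

lemma map_fst_le_of_forall_prod_univ_le {Q : Measure (α × β)} {μ : Measure α}
    (h : ∀ A, MeasurableSet A → Q (A ×ˢ univ) ≤ μ A) : Q.map Prod.fst ≤ μ := by
  refine le_iff.2 fun A hA => ?_
  rw [map_apply measurable_fst hA, ← prod_univ]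
  exact h A hA

lemma map_snd_le_of_forall_univ_prod_le {Q : Measure (α × β)} {ν : Measure β}
    (h : ∀ A, MeasurableSet A → Q (univ ×ˢ A) ≤ ν A) : Q.map Prod.snd ≤ ν := by
  refine le_iff.2 fun A hA => ?_
  rw [map_apply measurable_snd hA, ← univ_prod]
  exact h A hA

variable {μ : Measure α} {ν : Measure β}

lemma map_fst_inv_smul_prod [IsFiniteMeasure μ] [SFinite ν] (h : μ univ = ν univ) :
    ((μ univ)⁻¹ • μ.prod ν).map Prod.fst = μ := by
  rw [Measure.map_smul, map_fst_prod, smul_smul, ← h]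
  rcases eq_or_ne (μ univ) 0 with h0 | h0
  · rw [measure_univ_eq_zero.1 h0, smul_zero]
  · rw [ENNReal.inv_mul_cancel h0 (measure_ne_top μ univ), one_smul]

lemma map_snd_inv_smul_prod [IsFiniteMeasure ν] (h : μ univ = ν univ) :
    ((μ univ)⁻¹ • μ.prod ν).map Prod.snd = ν := by
  rw [Measure.map_smul, map_snd_prod, smul_smul, h]
  rcases eq_or_ne (ν univ) 0 with h0 | h0
  · rw [measure_univ_eq_zero.1 h0, smul_zero]
  · rw [ENNReal.inv_mul_cancel h0 (measure_ne_top ν univ), one_smul]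

lemma exists_map_fst_eq_map_snd_eq_le [IsFiniteMeasure μ] [IsFiniteMeasure ν] (h : μ univ = ν univ) (Q : Measure (α × β))
    (hQ₁ : Q.map Prod.fst ≤ μ) (hQ₂ : Q.map Prod.snd ≤ ν) :
    ∃ π : Measure (α × β), π.map Prod.fst = μ ∧ π.map Prod.snd = ν ∧ Q ≤ π := by
  have hQ₁univ : Q.map Prod.fst univ = Q univ := map_apply measurable_fst .univ
  have hQ₂univ : Q.map Prod.snd univ = Q univ := map_apply measurable_snd .univ
  have : IsFiniteMeasure Q :=
    ⟨hQ₁univ ▸ (hQ₁ univ).trans_lt (measure_lt_top μ univ)⟩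
  set μ' := μ - Q.map Prod.fst
  set ν' := ν - Q.map Prod.snd
  have hμ' : μ' univ = ν' univ := by
    rw [sub_apply .univ hQ₁, sub_apply .univ hQ₂, hQ₁univ, hQ₂univ, h]
  have : IsFiniteMeasure μ' := inferInstanceAs (IsFiniteMeasure (μ - _))
  have : IsFiniteMeasure ν' := inferInstanceAs (IsFiniteMeasure (ν - _))
  refine ⟨Q + (μ' univ)⁻¹ • μ'.prod ν', ?_, ?_, Measure.le_add_right le_rfl⟩
  · rw [Measure.map_add _ _ measurable_fst, map_fst_inv_smul_prod hμ', add_comm]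
    exact sub_add_cancel_of_le hQ₁
  · rw [Measure.map_add _ _ measurable_snd, map_snd_inv_smul_prod hμ', add_comm]
    exact sub_add_cancel_of_le hQ₂

end MeasureTheory.Measure

lemma integral_le_one_sub_mul_measureReal {γ : Type*} [MeasurableSpace γ] {μ : Measure γ}
    [IsProbabilityMeasure μ] {f : γ → ℝ} (hf : Integrable f μ) (hf1 : ∀ x, f x ≤ 1)
    {E : Set γ} (hE : MeasurableSet E) {c : ℝ} (hfc : ∀ x ∈ E, f x ≤ c) :
    ∫ x, f x ∂μ ≤ 1 - (1 - c) * μ.real E := by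
  have hfE : ∫ x in E, f x ∂μ ≤ c * μ.real E := by
    simpa [mul_comm] using setIntegral_mono_on hf.integrableOn (integrable_const c) hE hfc
  have hfEc : ∫ x in Eᶜ, f x ∂μ ≤ μ.real Eᶜ := by
    simpa using setIntegral_mono_on hf.integrableOn (integrable_const 1) hE.compl
      fun x _ => hf1 x
  rw [← integral_add_compl hE hf, probReal_compl_eq_one_sub hE] at *
  linarith

lemma wass_le_integral {X : Type*} [MeasurableSpace X] {dstar : X → X → ℝ}
    (hd0 : ∀ x y, 0 ≤ dstar x y) {μ ν : Measure X} {π : Measure (X × X)}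
    [IsProbabilityMeasure π] (hπ : IsCoupling π μ ν) :
    wass dstar μ ν ≤ ∫ p, dstar p.1 p.2 ∂π := by
  refine csInf_le ⟨0, ?_⟩ ⟨π, inferInstance, hπ, rfl⟩
  rintro r ⟨π', -, -, rfl⟩
  exact integral_nonneg fun p => hd0 p.1 p.2

theorem coupling_completion_and_wasserstein_bound_general
    {X : Type*} [MeasurableSpace X]
    (νx νy : Measure X) [IsProbabilityMeasure νx] [IsProbabilityMeasure νy]
    (Q : Measure (X × X))
    (hQ1 : ∀ A : Set X, MeasurableSet A → Q (A ×ˢ Set.univ) ≤ νx A)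
    (hQ2 : ∀ A : Set X, MeasurableSet A → Q (Set.univ ×ˢ A) ≤ νy A)
    (dstar : X → X → ℝ) (hdmeas : Measurable fun p : X × X => dstar p.1 p.2)
    (hd0 : ∀ x y, 0 ≤ dstar x y) (hd1 : ∀ x y, dstar x y ≤ 1)
    (c : ℝ) (hc1 : c < 1)
    (E : Set (X × X)) (hE : MeasurableSet E) (hQE : Q Eᶜ = 0)
    (hEc : ∀ p ∈ E, dstar p.1 p.2 ≤ c) :
    (∃ π : Measure (X × X), IsProbabilityMeasure π ∧ IsCoupling π νx νy ∧ Q ≤ π) ∧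
    wass dstar νx νy ≤ 1 - (1 - c) * (Q Set.univ).toReal := by
  obtain ⟨π, hπ₁, hπ₂, hQπ⟩ := Measure.exists_map_fst_eq_map_snd_eq_le (by simp) Q
    (Measure.map_fst_le_of_forall_prod_univ_le hQ1) (Measure.map_snd_le_of_forall_univ_prod_le hQ2)
  have : IsProbabilityMeasure π := by
    rw [← Measure.isProbabilityMeasure_map_iff measurable_fst.aemeasurable, hπ₁]
    infer_instance
  refine ⟨⟨π, inferInstance, ⟨hπ₁, hπ₂⟩, hQπ⟩, ?_⟩
  have hint : Integrable (fun p : X × X => dstar p.1 p.2) π :=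
    .of_bound hdmeas.aestronglyMeasurable 1 <| .of_forall fun p => by
      simpa [abs_of_nonneg (hd0 p.1 p.2)] using hd1 p.1 p.2
  have hQπE : (Q univ).toReal ≤ π.real E := by
    rw [← measure_of_measure_compl_eq_zero hQE]
    exact ENNReal.toReal_mono (measure_ne_top π E) (hQπ E)
  calc wass dstar νx νy ≤ ∫ p, dstar p.1 p.2 ∂π := wass_le_integral hd0 ⟨hπ₁, hπ₂⟩
    _ ≤ 1 - (1 - c) * π.real E :=
      integral_le_one_sub_mul_measureReal hint (fun p => hd1 p.1 p.2) hE hEc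
    _ ≤ 1 - (1 - c) * (Q univ).toReal :=
      sub_le_sub_left (mul_le_mul_of_nonneg_left hQπE (by linarith)) 1

/-- A subprobability `Q` whose marginals are dominated by `ν_x`, `ν_y` extends to
a coupling `π ≥ Q`; if moreover `Q` is supported on a set where the cost
`dstar ≤ c < 1`, then `W̄(ν_x,ν_y) ≤ 1 − (1−c)·Q(X²)`. -/
theorem coupling_completion_and_wasserstein_bound
    {X : Type*} [MetricSpace X] [MeasurableSpace X] [BorelSpace X]
    [CompleteSpace X] [TopologicalSpace.SeparableSpace X]
    (νx νy : Measure X) [IsProbabilityMeasure νx] [IsProbabilityMeasure νy]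
    (Q : Measure (X × X)) (hQfin : Q Set.univ ≤ 1)
    (hQ1 : ∀ A : Set X, MeasurableSet A → Q (A ×ˢ Set.univ) ≤ νx A)
    (hQ2 : ∀ A : Set X, MeasurableSet A → Q (Set.univ ×ˢ A) ≤ νy A)
    (dstar : X → X → ℝ) (hdmeas : Measurable fun p : X × X => dstar p.1 p.2)
    (hd0 : ∀ x y, 0 ≤ dstar x y) (hd1 : ∀ x y, dstar x y ≤ 1)
    (c : ℝ) (hc0 : 0 ≤ c) (hc1 : c < 1)
    (E : Set (X × X)) (hE : MeasurableSet E) (hQE : Q Eᶜ = 0)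
    (hEc : ∀ p ∈ E, dstar p.1 p.2 ≤ c) :
    (∃ π : Measure (X × X), IsProbabilityMeasure π ∧ IsCoupling π νx νy ∧ Q ≤ π) ∧
    wass dstar νx νy ≤ 1 - (1 - c) * (Q Set.univ).toReal :=
  coupling_completion_and_wasserstein_bound_general νx νy Q hQ1 hQ2 dstar hdmeas hd0 hd1 c hc1 E hE
    hQE hEc
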